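/- Let $d \geq 3$, $\gamma \in [0,1]$, and let $l : K \to (0, 1]$ be a continuous function on a compact set $K \subset \mathbb{R}^d$, with $f = \sqrt{l}$. Suppose $\{x_k\}_{k \in \mathcal{I}}$ is a finite collection of points such that the balls $B(x_k, l(x_k))$ cover $K$, at most $N$ of them intersect at any point, and $(1-8\rho) l(x_k) \leq l(x) \leq (1+8\rho) l(x_k)$ on $B(x_k, l(x_k))$ for some $\rho \in (0, 1/8)$. Set $l_k = l(x_k)$, $f_k = \sqrt{l_k}$, $h_k = \hbar/(l_k f_k)$. If $d - 3 - \gamma \geq 0$, then $\sum_{k \in \mathcal{I}} h_k^{1+\gamma-d} f_k^{2\gamma} \leq C\, \hbar^{1+\gamma-d}$ with $C$ depending only on $d$, $\gamma$, $N$, $\rho$, and the measure of a neighborhood of $K$, but not on $\hbar$ or the cardinality of $\mathcal{I}$. -/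

import Mathlib

open Set Metric MeasureTheory

/-!
Each local error equals `ħ^(1+γ-d) l_k^((3d-3-γ)/2)`, and since `l_k ≤ 1` and
`(3d-3-γ)/2 ≥ d` it is at most `ħ^(1+γ-d) l_k^d`, i.e. `ħ^(1+γ-d)` times the volume of
`B(x_k, l_k)` divided by that of the unit ball. These balls lie in the compact
`1`-neighbourhood of `K` and overlap at most `N` times, so their volumes sum to at most
`N` times its volume.
-/

namespace MeasureTheory

theorem sum_measure_le_mul_of_ncard_le {α ι : Type*} [MeasurableSpace α] (μ : Measure α)
    [Fintype ι] {s : ι → Set α} (hs : ∀ k, MeasurableSet (s k)) {T : Set α}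
    (hT : MeasurableSet T) (hsT : ∀ k, s k ⊆ T) {N : ℕ}
    (hN : ∀ y, {k | y ∈ s k}.ncard ≤ N) :
    ∑ k, μ (s k) ≤ N * μ T := by
  classical
  have hpoint : ∀ y, ∑ k, (s k).indicator (fun _ => (1 : ENNReal)) y
      ≤ T.indicator (fun _ => (N : ENNReal)) y := by
    intro y
    by_cases hy : y ∈ T
    · have hcount : ∑ k, (s k).indicator (fun _ => (1 : ENNReal)) y = {k | y ∈ s k}.ncard := by
        simp [Set.indicator_apply, Finset.sum_boole, Set.ncard_eq_toFinset_card']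
      rw [hcount, indicator_of_mem hy]
      exact_mod_cast hN y
    · have hnot : ∀ k, y ∉ s k := fun k hk => hy (hsT k hk)
      simp [hnot]
  calc ∑ k, μ (s k) = ∫⁻ y, ∑ k, (s k).indicator (fun _ => (1 : ENNReal)) y ∂μ := by
        rw [lintegral_finsetSum _ fun k _ => measurable_const.indicator (hs k)]
        simp [lintegral_indicator (hs _)]
    _ ≤ ∫⁻ y, T.indicator (fun _ => (N : ENNReal)) y ∂μ := lintegral_mono hpoint
    _ = N * μ T := by rw [lintegral_indicator_const hT]

end MeasureTheory

section BallPacking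

variable {E ι : Type*} [NormedAddCommGroup E] [NormedSpace ℝ E] [MeasurableSpace E]
  [BorelSpace E] [FiniteDimensional ℝ E] (μ : Measure E) [μ.IsAddHaarMeasure] [Fintype ι]

theorem sum_pow_finrank_le_of_ncard_le {K : Set E} (hK : IsCompact K) {x : ι → E} {r : ι → ℝ}
    (hx : ∀ k, x k ∈ K) (hr : ∀ k, r k ∈ Ioc (0 : ℝ) 1) {N : ℕ}
    (hN : ∀ y, {k | y ∈ ball (x k) (r k)}.ncard ≤ N) :
    ∑ k, r k ^ Module.finrank ℝ E
      ≤ N * (μ (cthickening 1 K)).toReal / (μ (ball 0 1)).toReal := by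
  have hsub : ∀ k, ball (x k) (r k) ⊆ cthickening 1 K := fun k =>
    ((ball_subset_ball (hr k).2).trans (ball_subset_thickening (hx k) 1)).trans
      (thickening_subset_cthickening 1 K)
  have hmeas := sum_measure_le_mul_of_ncard_le μ (fun _ => measurableSet_ball)
    isClosed_cthickening.measurableSet hsub hN
  have hfin : μ (cthickening 1 K) ≠ ⊤ := hK.cthickening.measure_lt_top.ne
  have hunit : 0 < (μ (ball (0 : E) 1)).toReal :=
    ENNReal.toReal_pos (measure_ball_pos μ _ one_pos).ne' measure_ball_lt_top.ne
  rw [le_div_iff₀ hunit, Finset.sum_mul]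
  calc ∑ k, r k ^ Module.finrank ℝ E * (μ (ball (0 : E) 1)).toReal
      = (∑ k, μ (ball (x k) (r k))).toReal := by
        rw [ENNReal.toReal_sum fun k _ => measure_ball_lt_top.ne]
        refine Finset.sum_congr rfl fun k _ => ?_
        rw [Measure.addHaar_ball_of_pos μ _ (hr k).1, ENNReal.toReal_mul,
          ENNReal.toReal_ofReal (pow_nonneg (hr k).1.le _)]
    _ ≤ (N * μ (cthickening 1 K)).toReal :=
        ENNReal.toReal_mono (ENNReal.mul_ne_top (ENNReal.natCast_ne_top N) hfin) hmeas
    _ = N * (μ (cthickening 1 K)).toReal := by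
        rw [ENNReal.toReal_mul, ENNReal.toReal_natCast]

end BallPacking

namespace Real

theorem div_mul_sqrt_rpow_mul_sqrt_rpow {a : ℝ} (ha : 0 < a) {ħ : ℝ} (hħ : 0 ≤ ħ) (γ d : ℝ) :
    (ħ / (a * √a)) ^ (1 + γ - d) * √a ^ (2 * γ)
      = ħ ^ (1 + γ - d) * a ^ ((3 * d - 3 - γ) / 2) := by
  have h32 : a * √a = a ^ ((3 : ℝ) / 2) := by
    rw [sqrt_eq_rpow, ← rpow_one_add' ha.le (by norm_num)]
    norm_num
  rw [h32, sqrt_eq_rpow, div_rpow hħ (rpow_nonneg ha.le _), ← rpow_mul ha.le,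
    ← rpow_mul ha.le, div_eq_mul_inv, ← rpow_neg ha.le, mul_assoc, ← rpow_add ha]
  ring_nf

theorem div_mul_sqrt_rpow_mul_sqrt_rpow_le {a : ℝ} (ha : a ∈ Ioc (0 : ℝ) 1) {ħ : ℝ}
    (hħ : 0 ≤ ħ) {γ : ℝ} {d : ℕ} (hdγ : 0 ≤ (d : ℝ) - 3 - γ) :
    (ħ / (a * √a)) ^ (1 + γ - d) * √a ^ (2 * γ) ≤ ħ ^ (1 + γ - d) * a ^ d := by
  rw [div_mul_sqrt_rpow_mul_sqrt_rpow ha.1 hħ, ← rpow_natCast a d]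
  exact mul_le_mul_of_nonneg_left
    (rpow_le_rpow_of_exponent_ge ha.1 ha.2 (by linarith)) (rpow_nonneg hħ _)

end Real

theorem stmt13_general {d : ℕ} (γ : ℝ)
    (hdγ : 0 ≤ (d:ℝ) - 3 - γ)
    (K : Set (EuclideanSpace ℝ (Fin d))) (hK : IsCompact K)
    (N : ℕ) (ρ : ℝ)
    (l : EuclideanSpace ℝ (Fin d) → ℝ)
    (hl01 : ∀ x ∈ K, l x ∈ Ioc (0:ℝ) 1) :
    ∃ C : ℝ, ∀ (ι : Type) (_ : Fintype ι) (xk : ι → EuclideanSpace ℝ (Fin d)),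
      (∀ k, xk k ∈ K) →
      (K ⊆ ⋃ k, ball (xk k) (l (xk k))) →
      (∀ y : EuclideanSpace ℝ (Fin d), {k | y ∈ ball (xk k) (l (xk k))}.ncard ≤ N) →
      (∀ k, ∀ x ∈ ball (xk k) (l (xk k)) ∩ K,
        (1 - 8 * ρ) * l (xk k) ≤ l x ∧ l x ≤ (1 + 8 * ρ) * l (xk k)) →
      ∀ hbar ∈ Ioc (0:ℝ) 1,
        ∑ k : ι, (hbar / (l (xk k) * Real.sqrt (l (xk k)))) ^ (1 + γ - (d:ℝ))
            * (Real.sqrt (l (xk k))) ^ (2 * γ)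
          ≤ C * hbar ^ (1 + γ - (d:ℝ)) := by
  refine ⟨N * (volume (cthickening 1 K)).toReal
    / (volume (ball (0 : EuclideanSpace ℝ (Fin d)) 1)).toReal, ?_⟩
  intro ι _ xk hxK _ hN _ hbar hbar01
  have hpack := sum_pow_finrank_le_of_ncard_le volume hK hxK (fun k => hl01 _ (hxK k)) hN
  rw [finrank_euclideanSpace_fin] at hpack
  calc _ ≤ ∑ k, hbar ^ (1 + γ - (d:ℝ)) * l (xk k) ^ d := Finset.sum_le_sum fun k _ =>
        Real.div_mul_sqrt_rpow_mul_sqrt_rpow_le (hl01 _ (hxK k)) hbar01.1.le hdγ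
    _ = hbar ^ (1 + γ - (d:ℝ)) * ∑ k, l (xk k) ^ d := (Finset.mul_sum ..).symm
    _ ≤ _ := by
        rw [mul_comm _ (hbar ^ _)]
        exact mul_le_mul_of_nonneg_left hpack (Real.rpow_nonneg hbar01.1.le _)

/-- Summation of the local errors in the multiscale argument: with `l_k = l(x_k)`,
`f_k = √l_k`, `h_k = ħ/(l_k f_k)`, and `d - 3 - γ ≥ 0`, one has
`∑_k h_k^{1+γ-d} f_k^{2γ} ≤ C ħ^{1+γ-d}` with `C` independent of `ħ` and of the
covering family. -/
theorem stmt13 {d : ℕ} (hd : 3 ≤ d) (γ : ℝ) (hγ : γ ∈ Icc (0:ℝ) 1)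
    (hdγ : 0 ≤ (d:ℝ) - 3 - γ)
    (K : Set (EuclideanSpace ℝ (Fin d))) (hK : IsCompact K)
    (N : ℕ) (ρ : ℝ) (hρ : ρ ∈ Ioo (0:ℝ) (1/8))
    (l : EuclideanSpace ℝ (Fin d) → ℝ) (hlcont : ContinuousOn l K)
    (hl01 : ∀ x ∈ K, l x ∈ Ioc (0:ℝ) 1) :
    ∃ C : ℝ, ∀ (ι : Type) (_ : Fintype ι) (xk : ι → EuclideanSpace ℝ (Fin d)),
      (∀ k, xk k ∈ K) →
      (K ⊆ ⋃ k, ball (xk k) (l (xk k))) →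
      (∀ y : EuclideanSpace ℝ (Fin d), {k | y ∈ ball (xk k) (l (xk k))}.ncard ≤ N) →
      (∀ k, ∀ x ∈ ball (xk k) (l (xk k)) ∩ K,
        (1 - 8 * ρ) * l (xk k) ≤ l x ∧ l x ≤ (1 + 8 * ρ) * l (xk k)) →
      ∀ hbar ∈ Ioc (0:ℝ) 1,
        ∑ k : ι, (hbar / (l (xk k) * Real.sqrt (l (xk k)))) ^ (1 + γ - (d:ℝ))
            * (Real.sqrt (l (xk k))) ^ (2 * γ)
          ≤ C * hbar ^ (1 + γ - (d:ℝ)) :=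
  stmt13_general γ hdγ K hK N ρ l hl01
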